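/- Let F be a connected GSC, n ≥ 2, and Γₙ its n-th Hata graph. Then χ(Γₙ) ≥ |𝒟|^{n−1} if and only if Γₙ has an essential cut vertex. -/

import Mathlib

open Set

/-- The map φ_d(x) = (x + d)/N on ℝ². -/
noncomputable def phi (N : ℕ) (d : ℕ × ℕ) (x : ℝ × ℝ) : ℝ × ℝ :=
  ((x.1 + d.1) / N, (x.2 + d.2) / N)

/-- φ_{i₁⋯iₙ} = φ_{i₁} ∘ ⋯ ∘ φ_{iₙ}. -/
noncomputable def phiWord (N : ℕ) (w : List (ℕ × ℕ)) : (ℝ × ℝ) → (ℝ × ℝ) :=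
  w.foldr (fun d f => phi N d ∘ f) id

/-- Words of length n over the digit set D. -/
def GscWord (D : Finset (ℕ × ℕ)) (n : ℕ) : Type :=
  {w : List (ℕ × ℕ) // w.length = n ∧ ∀ d ∈ w, d ∈ D}

/-- The n-th Hata graph Γₙ: vertices are words of length n, with an edge between
distinct words 𝐢, 𝐣 iff φ_𝐢(F) ∩ φ_𝐣(F) ≠ ∅. -/
noncomputable def hata (N : ℕ) (D : Finset (ℕ × ℕ)) (F : Set (ℝ × ℝ)) (n : ℕ) :
    SimpleGraph (GscWord D n) where
  Adj u v := u ≠ v ∧ (phiWord N u.val '' F ∩ phiWord N v.val '' F).Nonempty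
  symm := by
    constructor
    intro u v h
    exact ⟨h.1.symm, by rw [Set.inter_comm]; exact h.2⟩
  loopless := by
    constructor
    intro u h
    exact h.1 rfl

/-- v is a cut vertex of G: G − {v} is disconnected. -/
def IsCutVertex {V : Type*} (G : SimpleGraph V) (v : V) : Prop :=
  ¬ (G.induce {w | w ≠ v}).Connected

/-- The number of vertices of a connected component of a graph. -/
noncomputable def compCard {V : Type*} (G : SimpleGraph V)
    (c : G.ConnectedComponent) : ℕ :=
  Nat.card {u : V // G.connectedComponentMk u = c}

/-- χ(G) ≥ k: there is a cut vertex v such that at least two distinct connected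
components of G − {v} have at least k vertices each (i.e. |G₂(v)| ≥ k). -/
def ChiGe {V : Type*} (G : SimpleGraph V) (k : ℕ) : Prop :=
  ∃ v : V, IsCutVertex G v ∧
    ∃ c₁ c₂ : (G.induce {w | w ≠ v}).ConnectedComponent, c₁ ≠ c₂ ∧
      k ≤ compCard (G.induce {w | w ≠ v}) c₁ ∧
      k ≤ compCard (G.induce {w | w ≠ v}) c₂

/-- In Γₙ − {v}, the word classes i𝒟^{n−1} and j𝒟^{n−1} lie in different
connected components: no word starting with i is reachable from a word starting
with j. -/
def SepAt (N : ℕ) (D : Finset (ℕ × ℕ)) (F : Set (ℝ × ℝ)) (n : ℕ)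
    (v : GscWord D n) (i j : ℕ × ℕ) : Prop :=
  ∀ u w : ↥{w : GscWord D n | w ≠ v},
    u.val.val.head? = some i → w.val.val.head? = some j →
      ¬ ((hata N D F n).induce {w | w ≠ v}).Reachable u w

/-- An essential cut vertex 𝐢 = i₁⋯iₙ of Γₙ: a cut vertex such that there are
digits i, j ∈ 𝒟 \ {i₁} with i𝒟^{n−1} and j𝒟^{n−1} in different components of
Γₙ − {𝐢}. -/
def EssentialCutVertex (N : ℕ) (D : Finset (ℕ × ℕ)) (F : Set (ℝ × ℝ)) (n : ℕ)
    (v : GscWord D n) : Prop :=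
  IsCutVertex (hata N D F n) v ∧
    ∃ i ∈ D, ∃ j ∈ D, v.val.head? ≠ some i ∧ v.val.head? ≠ some j ∧
      SepAt N D F n v i j

lemma phiWord_nil (N : ℕ) : phiWord N [] = id := rfl

lemma phiWord_cons (N : ℕ) (d : ℕ × ℕ) (w : List (ℕ × ℕ)) :
    phiWord N (d :: w) = phi N d ∘ phiWord N w := rfl

lemma phi_continuous (N : ℕ) (d : ℕ × ℕ) : Continuous (phi N d) := by
  unfold phi; fun_prop

lemma phiWord_continuous (N : ℕ) (w : List (ℕ × ℕ)) : Continuous (phiWord N w) := by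
  induction w with
  | nil => exact continuous_id
  | cons d w ih => rw [phiWord_cons]; exact (phi_continuous N d).comp ih

lemma phiWord_image_subset {N : ℕ} {D : Finset (ℕ × ℕ)} {F : Set (ℝ × ℝ)}
    (hFattr : F = ⋃ d ∈ D, phi N d '' F) (w : List (ℕ × ℕ)) (hw : ∀ d ∈ w, d ∈ D) :
    phiWord N w '' F ⊆ F := by
  induction w with
  | nil => simp [phiWord_nil]
  | cons d w ih =>
      rw [phiWord_cons, Set.image_comp]
      refine subset_trans (Set.image_mono (ih (fun e he => hw e (List.mem_cons_of_mem d he)))) ?_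
      intro x hx
      rw [hFattr]
      exact Set.mem_biUnion (hw d List.mem_cons_self) hx

lemma F_cover {N : ℕ} {D : Finset (ℕ × ℕ)} {F : Set (ℝ × ℝ)}
    (hFattr : F = ⋃ d ∈ D, phi N d '' F) (m : ℕ) :
    ∀ x ∈ F, ∃ w : GscWord D m, x ∈ phiWord N w.val '' F := by
  induction m with
  | zero => intro x hx; exact ⟨⟨[], rfl, by simp⟩, by simpa [phiWord_nil] using hx⟩
  | succ m ih =>
      intro x hx
      rw [hFattr] at hx
      simp only [Set.mem_iUnion] at hx
      obtain ⟨d, hd, y, hy, hxy⟩ := hx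
      obtain ⟨w, z, hz, hzw⟩ := ih y hy
      refine ⟨⟨d :: w.val, by simp [w.2.1], ?_⟩, z, hz, ?_⟩
      · intro e he
        rcases List.mem_cons.mp he with h | h
        · exact h ▸ hd
        · exact w.2.2 e h
      · simp only [phiWord_cons, Function.comp_apply, hzw, hxy]

def gscEquiv (D : Finset (ℕ × ℕ)) (m : ℕ) : GscWord D m ≃ (Fin m → D) where
  toFun w k := ⟨w.val.get (Fin.cast w.2.1.symm k), w.2.2 _ (List.get_mem _ _)⟩
  invFun f := ⟨List.ofFn (fun k => (f k).val), by simp, by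
    intro d hd
    rw [List.mem_ofFn] at hd
    obtain ⟨k, hk⟩ := hd
    exact hk ▸ (f k).2⟩
  left_inv w := by
    apply Subtype.ext
    apply List.ext_get (by simp [w.2.1])
    intro k h1 h2
    simp [List.get_ofFn]
  right_inv f := by
    funext k
    apply Subtype.ext
    simp [List.get_ofFn]

instance gscFinite (D : Finset (ℕ × ℕ)) (m : ℕ) : Finite (GscWord D m) :=
  Finite.of_equiv _ (gscEquiv D m).symm

lemma gscCard (D : Finset (ℕ × ℕ)) (m : ℕ) : Nat.card (GscWord D m) = D.card ^ m := by
  rw [Nat.card_congr (gscEquiv D m)]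
  simp [Nat.card_eq_fintype_card, Fintype.card_fun]

lemma hata_preconnected (N : ℕ) (D : Finset (ℕ × ℕ)) (F : Set (ℝ × ℝ))
    (hFne : F.Nonempty) (hFc : IsCompact F)
    (hFattr : F = ⋃ d ∈ D, phi N d '' F) (hFconn : IsConnected F) (m : ℕ) :
    (hata N D F m).Preconnected := by
  intro u w
  by_contra hreach
  set G := hata N D F m with hG
  set A : Set (GscWord D m) := {a | G.Reachable u a} with hA
  have hclosed : ∀ s : Set (GscWord D m),
      IsClosed (⋃ a ∈ s, phiWord N (a : GscWord D m).val '' F) :=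
    fun s => (Set.toFinite s).isClosed_biUnion
      (fun a _ => (hFc.image (phiWord_continuous N a.val)).isClosed)
  have hsubF : ∀ a : GscWord D m, phiWord N a.val '' F ⊆ F :=
    fun a => phiWord_image_subset hFattr a.val a.2.2
  -- key: if x lies in φ_a F with a ∈ A and in φ_b F with b, then b ∈ A
  have hkey : ∀ a b : GscWord D m, a ∈ A →
      (phiWord N a.val '' F ∩ phiWord N b.val '' F).Nonempty → b ∈ A := by
    intro a b ha hne
    by_cases hab : a = b
    · exact hab ▸ ha
    · exact ha.trans (SimpleGraph.Adj.reachable ⟨hab, hne⟩)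
  have hcover : F ⊆ (⋃ a ∈ A, phiWord N (a : GscWord D m).val '' F) ∪
      (⋃ a ∈ Aᶜ, phiWord N (a : GscWord D m).val '' F) := by
    intro x hx
    obtain ⟨a, hxa⟩ := F_cover hFattr m x hx
    by_cases ha : a ∈ A
    · exact Or.inl (Set.mem_biUnion ha hxa)
    · exact Or.inr (Set.mem_biUnion ha hxa)
  have hdisj : F ∩ ((⋃ a ∈ A, phiWord N (a : GscWord D m).val '' F) ∩
      (⋃ a ∈ Aᶜ, phiWord N (a : GscWord D m).val '' F)) = ∅ := by
    ext x
    simp only [Set.mem_inter_iff, Set.mem_iUnion, Set.mem_empty_iff_false, iff_false]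
    rintro ⟨-, ⟨a, ha, hxa⟩, ⟨b, hb, hxb⟩⟩
    exact hb (hkey a b ha ⟨x, hxa, hxb⟩)
  rcases (isPreconnected_iff_subset_of_disjoint_closed.mp hFconn.isPreconnected)
      _ _ (hclosed A) (hclosed Aᶜ) hcover hdisj with h | h
  · -- F ⊆ union over A; but φ_w F ⊆ F, so w is adjacent/equal to some a ∈ A
    obtain ⟨y, hy⟩ := hFne
    have hxw : phiWord N w.val y ∈ F := hsubF w ⟨y, hy, rfl⟩
    obtain ⟨a, ha, hxa⟩ := Set.mem_iUnion₂.mp (h hxw)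
    exact hreach (hkey a w ha ⟨_, hxa, ⟨y, hy, rfl⟩⟩)
  · obtain ⟨y, hy⟩ := hFne
    have hxu : phiWord N u.val y ∈ F := hsubF u ⟨y, hy, rfl⟩
    obtain ⟨b, hb, hxb⟩ := Set.mem_iUnion₂.mp (h hxu)
    exact hb (hkey u b (SimpleGraph.Reachable.refl u) ⟨_, ⟨y, hy, rfl⟩, hxb⟩)

def consWord {D : Finset (ℕ × ℕ)} {m : ℕ} (i : ℕ × ℕ) (hi : i ∈ D)
    (w : GscWord D m) : GscWord D (m + 1) :=
  ⟨i :: w.val, by simp [w.2.1], by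
    intro d hd
    rcases List.mem_cons.mp hd with h | h
    · exact h ▸ hi
    · exact w.2.2 d h⟩

lemma consWord_injective {D : Finset (ℕ × ℕ)} {m : ℕ} (i : ℕ × ℕ) (hi : i ∈ D) :
    Function.Injective (consWord (D := D) (m := m) i hi) := by
  intro a b hab
  apply Subtype.ext
  have := congrArg Subtype.val hab
  simpa [consWord] using this

lemma consWord_adj {N : ℕ} {D : Finset (ℕ × ℕ)} {F : Set (ℝ × ℝ)} {m : ℕ}
    (i : ℕ × ℕ) (hi : i ∈ D) {a b : GscWord D m} (h : (hata N D F m).Adj a b) :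
    (hata N D F (m + 1)).Adj (consWord i hi a) (consWord i hi b) := by
  refine ⟨fun hc => h.1 (consWord_injective i hi hc), ?_⟩
  obtain ⟨x, hxa, hxb⟩ := h.2
  refine ⟨phi N i x, ?_, ?_⟩
  · show phi N i x ∈ phiWord N (i :: a.val) '' F
    rw [phiWord_cons, Set.image_comp]
    exact ⟨_, hxa, rfl⟩
  · show phi N i x ∈ phiWord N (i :: b.val) '' F
    rw [phiWord_cons, Set.image_comp]
    exact ⟨_, hxb, rfl⟩

lemma cylinder_reach (N : ℕ) (D : Finset (ℕ × ℕ)) (F : Set (ℝ × ℝ))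
    (hFne : F.Nonempty) (hFc : IsCompact F)
    (hFattr : F = ⋃ d ∈ D, phi N d '' F) (hFconn : IsConnected F) (m : ℕ)
    (v : GscWord D (m + 1)) (i : ℕ × ℕ) (hi : i ∈ D)
    (hvi : v.val.head? ≠ some i) (a b : GscWord D m)
    (ha : consWord i hi a ≠ v) (hb : consWord i hi b ≠ v) :
    ((hata N D F (m + 1)).induce {w | w ≠ v}).Reachable ⟨consWord i hi a, ha⟩
      ⟨consWord i hi b, hb⟩ := by
  have hr := hata_preconnected N D F hFne hFc hFattr hFconn m a b
  obtain ⟨p⟩ := hr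
  induction p with
  | nil => rfl
  | @cons x y z hxy p ih =>
      have hy : consWord i hi y ≠ v := by
        intro hc
        apply hvi
        rw [← hc]
        rfl
      exact (SimpleGraph.Adj.reachable
        (by exact consWord_adj i hi hxy : ((hata N D F (m + 1)).induce {w | w ≠ v}).Adj
          ⟨consWord i hi x, ha⟩ ⟨consWord i hi y, hy⟩)).trans (ih hy hb)

-- component size lemma
lemma comp_ge (N : ℕ) (D : Finset (ℕ × ℕ)) (F : Set (ℝ × ℝ))
    (hFne : F.Nonempty) (hFc : IsCompact F)
    (hFattr : F = ⋃ d ∈ D, phi N d '' F) (hFconn : IsConnected F) (m : ℕ)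
    (v : GscWord D (m + 1)) (i : ℕ × ℕ) (hi : i ∈ D)
    (hvi : v.val.head? ≠ some i) (a : GscWord D m) (ha : consWord i hi a ≠ v) :
    D.card ^ m ≤ compCard ((hata N D F (m + 1)).induce {w | w ≠ v})
      (((hata N D F (m + 1)).induce {w | w ≠ v}).connectedComponentMk ⟨consWord i hi a, ha⟩) := by
  set G' := (hata N D F (m + 1)).induce {w | w ≠ v} with hG'
  set c := G'.connectedComponentMk ⟨consWord i hi a, ha⟩ with hc
  have hne : ∀ b : GscWord D m, consWord i hi b ≠ v := by
    intro b hb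
    apply hvi
    rw [← hb]; rfl
  have hmk : ∀ b : GscWord D m,
      G'.connectedComponentMk ⟨consWord i hi b, hne b⟩ = c :=
    fun b => (SimpleGraph.ConnectedComponent.sound
      (cylinder_reach N D F hFne hFc hFattr hFconn m v i hi hvi b a (hne b) ha)).trans rfl
  have hinj : Function.Injective
      (fun b : GscWord D m =>
        (⟨⟨consWord i hi b, hne b⟩, hmk b⟩ :
          {u : ↥{w : GscWord D (m+1) | w ≠ v} // G'.connectedComponentMk u = c})) := by
    intro b₁ b₂ h
    have := congrArg (fun x => x.val.val) h
    exact consWord_injective i hi this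
  calc D.card ^ m = Nat.card (GscWord D m) := (gscCard D m).symm
    _ ≤ _ := Nat.card_le_card_of_injective _ hinj

/-- For a connected GSC F and n ≥ 2: χ(Γₙ) ≥ |𝒟|^{n−1} iff Γₙ has an essential
cut vertex. (The auxiliary lemma from prior work is assumed as `hlemma`.) -/
theorem stmt13 (N : ℕ) (hN : 2 ≤ N) (D : Finset (ℕ × ℕ))
    (hD : ∀ d ∈ D, d.1 < N ∧ d.2 < N) (hDcard : 1 < D.card ∧ D.card < N ^ 2)
    (F : Set (ℝ × ℝ)) (hFne : F.Nonempty) (hFc : IsCompact F)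
    (hFattr : F = ⋃ d ∈ D, phi N d '' F) (hFconn : IsConnected F)
    (n : ℕ) (hn : 2 ≤ n)
    (hlemma : ∀ v : GscWord D n, IsCutVertex (hata N D F n) v →
      (∃ c₁ c₂ : ((hata N D F n).induce {w | w ≠ v}).ConnectedComponent,
        c₁ ≠ c₂ ∧
        D.card ^ (n - 1) ≤ compCard ((hata N D F n).induce {w | w ≠ v}) c₁ ∧
        D.card ^ (n - 1) ≤ compCard ((hata N D F n).induce {w | w ≠ v}) c₂) →
      ∃ i ∈ D, ∃ j ∈ D, v.val.head? ≠ some i ∧ v.val.head? ≠ some j ∧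
        SepAt N D F n v i j) :
    ChiGe (hata N D F n) (D.card ^ (n - 1)) ↔
      ∃ v : GscWord D n, EssentialCutVertex N D F n v := by
  constructor
  · rintro ⟨v, hcut, c₁, c₂, hne, h1, h2⟩
    exact ⟨v, hcut, hlemma v hcut ⟨c₁, c₂, hne, h1, h2⟩⟩
  · rintro ⟨v, hcut, i, hi, j, hj, hvi, hvj, hsep⟩
    obtain ⟨m, rfl⟩ : ∃ m, n = m + 1 := ⟨n - 1, by omega⟩
    have hm1 : m + 1 - 1 = m := rfl
    -- base words
    have mkrep : ∀ d : ℕ × ℕ, d ∈ D → GscWord D m := fun d hd =>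
      ⟨List.replicate m d, List.length_replicate, by
        intro e he
        rw [List.eq_of_mem_replicate he]
        exact hd⟩
    have hnei : consWord i hi (mkrep i hi) ≠ v := by
      intro hc; apply hvi; rw [← hc]; rfl
    have hnej : consWord j hj (mkrep j hj) ≠ v := by
      intro hc; apply hvj; rw [← hc]; rfl
    set G' := (hata N D F (m + 1)).induce {w | w ≠ v} with hG'
    refine ⟨v, hcut, G'.connectedComponentMk ⟨consWord i hi (mkrep i hi), hnei⟩,
      G'.connectedComponentMk ⟨consWord j hj (mkrep j hj), hnej⟩, ?_, ?_, ?_⟩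
    · intro hc
      exact hsep ⟨consWord i hi (mkrep i hi), hnei⟩ ⟨consWord j hj (mkrep j hj), hnej⟩
        rfl rfl (SimpleGraph.ConnectedComponent.exact hc)
    · rw [hm1]
      exact comp_ge N D F hFne hFc hFattr hFconn m v i hi hvi (mkrep i hi) hnei
    · rw [hm1]
      exact comp_ge N D F hFne hFc hFattr hFconn m v j hj hvj (mkrep j hj) hnej
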